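/- Let V_{++}, V_{--}, V_{+-}, V_{-+} ⊆ (ℤ[t,t⁻¹])² denote the sets of vectors whose two entries are definite with the indicated sign patterns, and set V_1 = V_{++} ∪ V_{--}, V_2 = V_{+-} ∪ V_{-+}. Then under the action of B_{-t}: for a ∈ {1,2} and b = 3 - a, one has σ_a · V_a ⊆ V_a, (σ_a σ_b) · V_b ⊆ V_a, and Ω · V_a = V_b = Ω⁻¹ · V_a. -/

import Mathlib

open LaurentPolynomial

/-- A Laurent polynomial is *positive* when all of its coefficients are `≥ 0`. -/
def LaurentPos (p : LaurentPolynomial ℤ) : Prop := ∀ n : ℤ, 0 ≤ AddMonoidAlgebra.coeff p n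

/-- A Laurent polynomial is *negative* when all of its coefficients are `≤ 0`. -/
def LaurentNeg (p : LaurentPolynomial ℤ) : Prop := ∀ n : ℤ, AddMonoidAlgebra.coeff p n ≤ 0

/-- `V_{++}`: vectors with both entries positive. -/
def Vpp : Set (Fin 2 → LaurentPolynomial ℤ) := {v | LaurentPos (v 0) ∧ LaurentPos (v 1)}
/-- `V_{--}`: vectors with both entries negative. -/
def Vmm : Set (Fin 2 → LaurentPolynomial ℤ) := {v | LaurentNeg (v 0) ∧ LaurentNeg (v 1)}
/-- `V_{+-}`. -/
def Vpm : Set (Fin 2 → LaurentPolynomial ℤ) := {v | LaurentPos (v 0) ∧ LaurentNeg (v 1)}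
/-- `V_{-+}`. -/
def Vmp : Set (Fin 2 → LaurentPolynomial ℤ) := {v | LaurentNeg (v 0) ∧ LaurentPos (v 1)}

/-- `V₁ = V_{++} ∪ V_{--}`. -/
def V1 : Set (Fin 2 → LaurentPolynomial ℤ) := Vpp ∪ Vmm
/-- `V₂ = V_{+-} ∪ V_{-+}`. -/
def V2 : Set (Fin 2 → LaurentPolynomial ℤ) := Vpm ∪ Vmp

/-- `B_{-t}(σ₁)`. -/
noncomputable def M1 : Matrix (Fin 2) (Fin 2) (LaurentPolynomial ℤ) := !![T 1, 1; 0, 1]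
/-- `B_{-t}(σ₂)`. -/
noncomputable def M2 : Matrix (Fin 2) (Fin 2) (LaurentPolynomial ℤ) := !![1, 0; -T 1, T 1]
/-- `B_{-t}(Ω)` where `Ω = σ₁σ₂σ₁`. -/
noncomputable def MOmega : Matrix (Fin 2) (Fin 2) (LaurentPolynomial ℤ) := M1 * M2 * M1
/-- `B_{-t}(Ω⁻¹) = [[0, -t⁻²],[t⁻¹, 0]]`. -/
noncomputable def MOmegaInv : Matrix (Fin 2) (Fin 2) (LaurentPolynomial ℤ) :=
  !![0, -T (-2); T (-1), 0]

lemma T_mul_apply (k : ℤ) (p : LaurentPolynomial ℤ) (n : ℤ) :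
    AddMonoidAlgebra.coeff (T k * p : LaurentPolynomial ℤ) n = AddMonoidAlgebra.coeff p (-k + n) := by
  simpa using AddMonoidAlgebra.coeff_single_mul_apply p (1 : ℤ) k n

lemma LaurentPos.T_mul {p} (h : LaurentPos p) (k : ℤ) : LaurentPos (T k * p) := by
  intro n; rw [T_mul_apply]; exact h _
lemma LaurentNeg.T_mul {p} (h : LaurentNeg p) (k : ℤ) : LaurentNeg (T k * p) := by
  intro n; rw [T_mul_apply]; exact h _
lemma LaurentPos.add {p q} (hp : LaurentPos p) (hq : LaurentPos q) : LaurentPos (p + q) := by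
  intro n; rw [AddMonoidAlgebra.coeff_add, Finsupp.add_apply]; exact add_nonneg (hp n) (hq n)
lemma LaurentNeg.add {p q} (hp : LaurentNeg p) (hq : LaurentNeg q) : LaurentNeg (p + q) := by
  intro n; rw [AddMonoidAlgebra.coeff_add, Finsupp.add_apply]; exact add_nonpos (hp n) (hq n)
lemma LaurentPos.neg {p} (hp : LaurentPos p) : LaurentNeg (-p) := by
  intro n; rw [AddMonoidAlgebra.coeff_neg, Finsupp.neg_apply]; exact neg_nonpos.mpr (hp n)
lemma LaurentNeg.neg {p} (hp : LaurentNeg p) : LaurentPos (-p) := by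
  intro n; rw [AddMonoidAlgebra.coeff_neg, Finsupp.neg_apply]; exact neg_nonneg.mpr (hp n)
lemma LaurentPos.negT_mul {p} (h : LaurentPos p) (k : ℤ) : LaurentNeg (-T k * p) := by
  rw [neg_mul]; exact (h.T_mul k).neg
lemma LaurentNeg.negT_mul {p} (h : LaurentNeg p) (k : ℤ) : LaurentPos (-T k * p) := by
  rw [neg_mul]; exact (h.T_mul k).neg

lemma mulVec0 (a b c d : LaurentPolynomial ℤ) (v : Fin 2 → LaurentPolynomial ℤ) :
    (!![a,b;c,d]).mulVec v 0 = a * v 0 + b * v 1 := by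
  simp [Matrix.mulVec, dotProduct, Fin.sum_univ_two]
lemma mulVec1 (a b c d : LaurentPolynomial ℤ) (v : Fin 2 → LaurentPolynomial ℤ) :
    (!![a,b;c,d]).mulVec v 1 = c * v 0 + d * v 1 := by
  simp [Matrix.mulVec, dotProduct, Fin.sum_univ_two]

lemma M12_eq : M1 * M2 = !![0, T 1; -T 1, T 1] := by
  simp [M1, M2, Matrix.mul_fin_two]
lemma M21_eq : M2 * M1 = !![T 1, 1; -T 2, 0] := by
  simp [M1, M2, Matrix.mul_fin_two, ← T_add, neg_mul]
lemma MOmega_eq : MOmega = !![0, T 1; -T 2, 0] := by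
  rw [MOmega, M12_eq, M1]
  simp [Matrix.mul_fin_two, ← T_add, neg_mul]
lemma MOmega_mul_inv : MOmega * MOmegaInv = 1 := by
  rw [MOmega_eq, MOmegaInv]
  simp only [Matrix.mul_fin_two, Matrix.one_fin_two, mul_neg, neg_mul, mul_zero, zero_mul,
    add_zero, zero_add, neg_neg, ← T_add]
  norm_num
lemma MOmegaInv_mul : MOmegaInv * MOmega = 1 := by
  rw [MOmega_eq, MOmegaInv]
  simp only [Matrix.mul_fin_two, Matrix.one_fin_two, mul_neg, neg_mul, mul_zero, zero_mul,
    add_zero, zero_add, neg_neg, ← T_add]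
  norm_num

lemma hM1 : ∀ v ∈ V1, M1.mulVec v ∈ V1 := by
  rintro v (⟨h0, h1⟩ | ⟨h0, h1⟩)
  · left; exact ⟨by rw [M1, mulVec0]; exact (h0.T_mul 1).add (by simpa using h1),
      by rw [M1, mulVec1]; simpa using h1⟩
  · right; exact ⟨by rw [M1, mulVec0]; exact (h0.T_mul 1).add (by simpa using h1),
      by rw [M1, mulVec1]; simpa using h1⟩

lemma hM2 : ∀ v ∈ V2, M2.mulVec v ∈ V2 := by
  rintro v (⟨h0, h1⟩ | ⟨h0, h1⟩)
  · left; exact ⟨by rw [M2, mulVec0]; simpa using h0,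
      by rw [M2, mulVec1]; exact (h0.negT_mul 1).add (h1.T_mul 1)⟩
  · right; exact ⟨by rw [M2, mulVec0]; simpa using h0,
      by rw [M2, mulVec1]; exact (h0.negT_mul 1).add (h1.T_mul 1)⟩

lemma hM12 : ∀ v ∈ V2, (M1 * M2).mulVec v ∈ V1 := by
  rintro v (⟨h0, h1⟩ | ⟨h0, h1⟩)
  · right; exact ⟨by rw [M12_eq, mulVec0]; simpa using h1.T_mul 1,
      by rw [M12_eq, mulVec1]; exact (h0.negT_mul 1).add (h1.T_mul 1)⟩
  · left; exact ⟨by rw [M12_eq, mulVec0]; simpa using h1.T_mul 1,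
      by rw [M12_eq, mulVec1]; exact (h0.negT_mul 1).add (h1.T_mul 1)⟩

lemma hM21 : ∀ v ∈ V1, (M2 * M1).mulVec v ∈ V2 := by
  rintro v (⟨h0, h1⟩ | ⟨h0, h1⟩)
  · left; exact ⟨by rw [M21_eq, mulVec0]; exact (h0.T_mul 1).add (by simpa using h1),
      by rw [M21_eq, mulVec1]; simpa using h0.negT_mul 2⟩
  · right; exact ⟨by rw [M21_eq, mulVec0]; exact (h0.T_mul 1).add (by simpa using h1),
      by rw [M21_eq, mulVec1]; simpa using h0.negT_mul 2⟩

lemma hOm12 : ∀ v ∈ V1, MOmega.mulVec v ∈ V2 := by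
  rintro v (⟨h0, h1⟩ | ⟨h0, h1⟩)
  · left; exact ⟨by rw [MOmega_eq, mulVec0]; simpa using h1.T_mul 1,
      by rw [MOmega_eq, mulVec1]; simpa using h0.negT_mul 2⟩
  · right; exact ⟨by rw [MOmega_eq, mulVec0]; simpa using h1.T_mul 1,
      by rw [MOmega_eq, mulVec1]; simpa using h0.negT_mul 2⟩

lemma hOm21 : ∀ v ∈ V2, MOmega.mulVec v ∈ V1 := by
  rintro v (⟨h0, h1⟩ | ⟨h0, h1⟩)
  · right; exact ⟨by rw [MOmega_eq, mulVec0]; simpa using h1.T_mul 1,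
      by rw [MOmega_eq, mulVec1]; simpa using h0.negT_mul 2⟩
  · left; exact ⟨by rw [MOmega_eq, mulVec0]; simpa using h1.T_mul 1,
      by rw [MOmega_eq, mulVec1]; simpa using h0.negT_mul 2⟩

lemma hInv12 : ∀ v ∈ V1, MOmegaInv.mulVec v ∈ V2 := by
  rintro v (⟨h0, h1⟩ | ⟨h0, h1⟩)
  · right; exact ⟨by rw [MOmegaInv, mulVec0]; simpa using h1.negT_mul (-2),
      by rw [MOmegaInv, mulVec1]; simpa using h0.T_mul (-1)⟩
  · left; exact ⟨by rw [MOmegaInv, mulVec0]; simpa using h1.negT_mul (-2),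
      by rw [MOmegaInv, mulVec1]; simpa using h0.T_mul (-1)⟩

lemma hInv21 : ∀ v ∈ V2, MOmegaInv.mulVec v ∈ V1 := by
  rintro v (⟨h0, h1⟩ | ⟨h0, h1⟩)
  · left; exact ⟨by rw [MOmegaInv, mulVec0]; simpa using h1.negT_mul (-2),
      by rw [MOmegaInv, mulVec1]; simpa using h0.T_mul (-1)⟩
  · right; exact ⟨by rw [MOmegaInv, mulVec0]; simpa using h1.negT_mul (-2),
      by rw [MOmegaInv, mulVec1]; simpa using h0.T_mul (-1)⟩

/-- Sign behaviour of the `B_{-t}`-action on definite vectors: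
`σ_a · V_a ⊆ V_a`, `(σ_a σ_b) · V_b ⊆ V_a`, and `Ω · V_a = V_b = Ω⁻¹ · V_a`. -/
theorem burauNeg_action_on_definite_vectors :
    (∀ v ∈ V1, M1.mulVec v ∈ V1) ∧
    (∀ v ∈ V2, M2.mulVec v ∈ V2) ∧
    (∀ v ∈ V2, (M1 * M2).mulVec v ∈ V1) ∧
    (∀ v ∈ V1, (M2 * M1).mulVec v ∈ V2) ∧
    (MOmega.mulVec '' V1 = V2) ∧ (MOmega.mulVec '' V2 = V1) ∧
    (MOmegaInv.mulVec '' V1 = V2) ∧ (MOmegaInv.mulVec '' V2 = V1) := by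
  refine ⟨hM1, hM2, hM12, hM21, ?_, ?_, ?_, ?_⟩
  · apply Set.Subset.antisymm
    · rintro _ ⟨v, hv, rfl⟩; exact hOm12 v hv
    · intro w hw
      exact ⟨MOmegaInv.mulVec w, hInv21 w hw,
        by rw [Matrix.mulVec_mulVec, MOmega_mul_inv, Matrix.one_mulVec]⟩
  · apply Set.Subset.antisymm
    · rintro _ ⟨v, hv, rfl⟩; exact hOm21 v hv
    · intro w hw
      exact ⟨MOmegaInv.mulVec w, hInv12 w hw,
        by rw [Matrix.mulVec_mulVec, MOmega_mul_inv, Matrix.one_mulVec]⟩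
  · apply Set.Subset.antisymm
    · rintro _ ⟨v, hv, rfl⟩; exact hInv12 v hv
    · intro w hw
      exact ⟨MOmega.mulVec w, hOm21 w hw,
        by rw [Matrix.mulVec_mulVec, MOmegaInv_mul, Matrix.one_mulVec]⟩
  · apply Set.Subset.antisymm
    · rintro _ ⟨v, hv, rfl⟩; exact hInv21 v hv
    · intro w hw
      exact ⟨MOmega.mulVec w, hOm12 w hw,
        by rw [Matrix.mulVec_mulVec, MOmegaInv_mul, Matrix.one_mulVec]⟩
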